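/- arXiv:1912.02002 — 2 statements merged into one kernel-verified Lean document; each statement's English description precedes it below -/
import Mathlib

section
/- Tangency order is a bi-Lipschitz invariant of the outer metric: if h is a germ at the origin of a bi-Lipschitz homeomorphism of (ℝⁿ, 0) and γ₁, γ₂ are arcs, then the arcs h∘γ₁ and h∘γ₂ (suitably reparametrized so that ‖·(t)‖ = t) satisfy tord(h∘γ₁, h∘γ₂) = tord(γ₁, γ₂). More precisely, if K⁻¹‖x−y‖ ≤ ‖h(x)−h(y)‖ ≤ K‖x−y‖, then sup{α : ‖h(γ₁(t)) − h(γ₂(t))‖ = O(t^α)} = sup{α : ‖γ₁(t) − γ₂(t)‖ = O(t^α)}. -/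
open Filter Asymptotics Topology

/-- An arc in ℝⁿ: a map `γ : [0,ε) → ℝⁿ` with `‖γ(t)‖ = t`. -/
def IsArc {E : Type*} [NormedAddCommGroup E] (γ : ℝ → E) (ε : ℝ) : Prop :=
  0 < ε ∧ ∀ t ∈ Set.Ico (0:ℝ) ε, ‖γ t‖ = t

/-- Tangency order of two arcs: the supremum (in `EReal`) of the exponents `a`
with `‖γ₁(t) − γ₂(t)‖ = O(t^a)` as `t → 0⁺`. -/
noncomputable def tord {E : Type*} [NormedAddCommGroup E] (γ₁ γ₂ : ℝ → E) : EReal :=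
  sSup {x : EReal | ∃ a : ℝ, x = (a : EReal) ∧
    (fun t => ‖γ₁ t - γ₂ t‖) =O[𝓝[>] (0:ℝ)] (fun t => t ^ a)}

/-- tangency order is a bi-Lipschitz invariant of the outer metric:
if `h` is bi-Lipschitz with constant `K` and `h 0 = 0`, then
`sup{α : ‖h(γ₁(t)) − h(γ₂(t))‖ = O(t^α)} = sup{α : ‖γ₁(t) − γ₂(t)‖ = O(t^α)}`. -/
theorem tord_biLipschitz_invariant {E : Type*} [NormedAddCommGroup E]
    (γ₁ γ₂ : ℝ → E) (ε : ℝ) (h₁ : IsArc γ₁ ε) (h₂ : IsArc γ₂ ε)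
    (h : E → E) (K : ℝ) (hK : 1 ≤ K) (h0 : h 0 = 0)
    (hlip : ∀ x y : E, K⁻¹ * ‖x - y‖ ≤ ‖h x - h y‖ ∧ ‖h x - h y‖ ≤ K * ‖x - y‖) :
    tord (h ∘ γ₁) (h ∘ γ₂) = tord γ₁ γ₂ := by
  have hK0 : 0 < K := lt_of_lt_of_le one_pos hK
  have hO1 : (fun t => ‖h (γ₁ t) - h (γ₂ t)‖) =O[𝓝[>] (0:ℝ)]
      (fun t => ‖γ₁ t - γ₂ t‖) := by
    refine IsBigO.of_bound K (Filter.Eventually.of_forall fun t => ?_)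
    have := (hlip (γ₁ t) (γ₂ t)).2
    simpa [abs_of_nonneg (norm_nonneg _)] using this
  have hO2 : (fun t => ‖γ₁ t - γ₂ t‖) =O[𝓝[>] (0:ℝ)]
      (fun t => ‖h (γ₁ t) - h (γ₂ t)‖) := by
    refine IsBigO.of_bound K (Filter.Eventually.of_forall fun t => ?_)
    have := (hlip (γ₁ t) (γ₂ t)).1
    have : ‖γ₁ t - γ₂ t‖ ≤ K * ‖h (γ₁ t) - h (γ₂ t)‖ := by
      have := mul_le_mul_of_nonneg_left this (le_of_lt hK0)
      rwa [← mul_assoc, mul_inv_cancel₀ (ne_of_gt hK0), one_mul] at this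
    simpa [abs_of_nonneg (norm_nonneg _)] using this
  unfold tord
  congr 1
  ext x
  constructor
  · rintro ⟨a, rfl, hBO⟩
    exact ⟨a, rfl, hO2.trans (by simpa [Function.comp] using hBO)⟩
  · rintro ⟨a, rfl, hBO⟩
    exact ⟨a, rfl, by simpa [Function.comp] using hO1.trans hBO⟩
end

section
/- For the (q,β)-bridge A_{q,β} = T₊ ∪ T₋ ⊂ ℝ⁴ with 1 < β < q, where T_± = {0 ≤ t ≤ 1, −t^β ≤ x ≤ t^β, y = ±t^q, z = 0}, the tangent cone at the origin is the single ray {(0,0,0,t) : t ≥ 0}. -/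
open Filter Topology Metric

/-- Tangent cone at the origin: limits of sequences `λₖ • xₖ` with `xₖ ∈ X`, `xₖ → 0`, `λₖ > 0`. -/
def T0 {E : Type*} [NormedAddCommGroup E] [NormedSpace ℝ E] (X : Set E) : Set E :=
  {w | ∃ (x : ℕ → E) (l : ℕ → ℝ), (∀ k, x k ∈ X) ∧ Tendsto x atTop (𝓝 0) ∧
    (∀ k, 0 < l k) ∧ Tendsto (fun k => l k • x k) atTop (𝓝 w)}

/-- Ambient Lipschitz equivalence of germs at the origin: a germ of a bi-Lipschitz
homeomorphism `h` of `(ℝⁿ,0)` with `h(X) = Y` near `0`. -/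
def AmbientLipEquiv {E : Type*} [NormedAddCommGroup E] [NormedSpace ℝ E]
    (X Y : Set E) : Prop :=
  ∃ (h : E → E) (K ε : ℝ), 0 < ε ∧ 1 ≤ K ∧ h 0 = 0 ∧ Function.Injective h ∧
    (∀ x ∈ Metric.ball (0:E) ε, ∀ y ∈ Metric.ball (0:E) ε,
      K⁻¹ * ‖x - y‖ ≤ ‖h x - h y‖ ∧ ‖h x - h y‖ ≤ K * ‖x - y‖) ∧
    h '' (X ∩ Metric.ball (0:E) ε) = Y ∩ h '' (Metric.ball (0:E) ε)

/-- The `(q,β)`-bridge `A_{q,β} = T₊ ∪ T₋ ⊂ ℝ⁴`, coordinates `(x,y,z,t)`. -/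
def bridge (q β : ℝ) : Set (EuclideanSpace ℝ (Fin 4)) :=
  {p | ∃ x t : ℝ, 0 ≤ t ∧ t ≤ 1 ∧ |x| ≤ t ^ β ∧
    (p = ![x, t ^ q, 0, t] ∨ p = ![x, -(t ^ q), 0, t])}

/-! On the bridge both `|x|` and `|y|` are at most `t ^ β` with `β > 1`. Along a sequence
`λₖ pₖ → w` the products `λₖ tₖ` converge, so `|λₖ xₖ|, |λₖ yₖ| ≤ (λₖ tₖ) tₖ ^ (β - 1) → 0`
and only the `t`-coordinate of `w` survives. Conversely the curve `t ↦ (0, t ^ q, 0, t)` lies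
on the bridge and, as `q > 1`, has tangent `(0, 0, 0, 1)` at the origin; rescaling its points
by `(c + t) / t` reaches every point `(0, 0, 0, c)` of the ray. -/

theorem rpow_eq_mul_rpow_sub_one {t c : ℝ} (ht : 0 ≤ t) (hc : 1 < c) :
    t ^ c = t * t ^ (c - 1) := by
  conv_lhs => rw [← add_sub_cancel 1 c]
  rw [Real.rpow_add' ht (by linarith), Real.rpow_one]

theorem tendsto_mul_of_abs_le_rpow {α : Type*} {F : Filter α} {l t u : α → ℝ} {s c : ℝ}
    (hc : 1 < c) (hl : ∀ a, 0 ≤ l a) (ht₀ : ∀ a, 0 ≤ t a) (ht : Tendsto t F (𝓝 0))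
    (hlt : Tendsto (fun a => l a * t a) F (𝓝 s)) (hu : ∀ a, |u a| ≤ t a ^ c) :
    Tendsto (fun a => l a * u a) F (𝓝 0) := by
  refine squeeze_zero_norm (fun a => ?_)
    (by simpa using hlt.mul (ht.rpow_const_nhds_zero (by linarith : 0 < c - 1)))
  calc ‖l a * u a‖ = l a * |u a| := by rw [Real.norm_eq_abs, abs_mul, abs_of_nonneg (hl a)]
    _ ≤ l a * t a ^ c := mul_le_mul_of_nonneg_left (hu a) (hl a)
    _ = l a * t a * t a ^ (c - 1) := by rw [rpow_eq_mul_rpow_sub_one (ht₀ a) hc, mul_assoc]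

section TangentCone

variable {E : Type*} [NormedAddCommGroup E] [NormedSpace ℝ E]

theorem T0_mono {X Y : Set E} (h : X ⊆ Y) : T0 X ⊆ T0 Y := by
  rintro w ⟨x, l, hx, hx₀, hl, hlx⟩
  exact ⟨x, l, fun k => h (hx k), hx₀, hl, hlx⟩

theorem smul_mem_T0_of_tendsto_inv_smul {X : Set E} {x : ℕ → E} {t : ℕ → ℝ} {v : E}
    (hx : ∀ k, x k ∈ X) (ht₀ : ∀ k, 0 < t k) (ht : Tendsto t atTop (𝓝 0))
    (hv : Tendsto (fun k => (t k)⁻¹ • x k) atTop (𝓝 v)) {c : ℝ} (hc : 0 ≤ c) :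
    c • v ∈ T0 X := by
  have hx_eq : ∀ k, x k = t k • (t k)⁻¹ • x k := fun k => (smul_inv_smul₀ (ht₀ k).ne' _).symm
  refine ⟨x, fun k => (c + t k) * (t k)⁻¹, hx, ?_, fun k => ?_, ?_⟩
  · simpa [← hx_eq] using ht.smul hv
  · have := ht₀ k
    positivity
  · simpa [mul_smul] using (tendsto_const_nhds.add ht).smul hv

end TangentCone

section Cusp

theorem tendsto_euclideanSpace_apply {α ι : Type*} {F : Filter α} {f : α → EuclideanSpace ℝ ι}
    {w : EuclideanSpace ℝ ι} (h : Tendsto f F (𝓝 w)) (i : ι) :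
    Tendsto (fun a => f a i) F (𝓝 (w i)) :=
  ((PiLp.continuous_apply 2 _ i).tendsto w).comp h

variable {ι : Type*} [Fintype ι]

def cusp (j : ι) (c : ℝ) : Set (EuclideanSpace ℝ ι) :=
  {p | 0 ≤ p j ∧ ∀ i ≠ j, |p i| ≤ p j ^ c}

theorem T0_cusp_subset (j : ι) {c : ℝ} (hc : 1 < c) :
    T0 (cusp j c) ⊆ {w | 0 ≤ w j ∧ ∀ i ≠ j, w i = 0} := by
  rintro w ⟨x, l, hx, hx₀, hl, hlx⟩
  have hlx_apply (i : ι) : Tendsto (fun k => l k * x k i) atTop (𝓝 (w i)) := by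
    simpa using tendsto_euclideanSpace_apply hlx i
  have hxj : Tendsto (fun k => x k j) atTop (𝓝 0) := by
    simpa using tendsto_euclideanSpace_apply hx₀ j
  refine ⟨ge_of_tendsto' (hlx_apply j) fun k => mul_nonneg (hl k).le (hx k).1, fun i hi => ?_⟩
  exact tendsto_nhds_unique (hlx_apply i) <|
    tendsto_mul_of_abs_le_rpow hc (fun k => (hl k).le) (fun k => (hx k).1) hxj (hlx_apply j)
      fun k => (hx k).2 i hi

end Cusp

theorem bridge_subset_cusp {q β : ℝ} (hβ : 0 ≤ β) (hq : β ≤ q) : bridge q β ⊆ cusp 3 β := by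
  rintro p ⟨x, t, ht₀, ht₁, hx, hp | hp⟩ <;>
  · have htq : t ^ q ≤ t ^ β := Real.rpow_le_rpow_of_exponent_ge' ht₀ ht₁ hβ hq
    refine ⟨by simpa [hp] using ht₀, fun i hi => ?_⟩
    fin_cases i <;>
      simp_all [abs_of_nonneg (Real.rpow_nonneg ht₀ q), Real.rpow_nonneg ht₀ β]

theorem tendsto_inv_smul_bridge_curve {q : ℝ} (hq : 1 < q) {t : ℕ → ℝ} (ht₀ : ∀ k, 0 < t k)
    (ht : Tendsto t atTop (𝓝 0)) :
    Tendsto (fun k => (t k)⁻¹ • (WithLp.toLp 2 ![0, t k ^ q, 0, t k] : EuclideanSpace ℝ (Fin 4)))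
      atTop (𝓝 (WithLp.toLp 2 ![0, 0, 0, 1])) := by
  have h_eq (k : ℕ) : (t k)⁻¹ • (WithLp.toLp 2 ![0, t k ^ q, 0, t k] : EuclideanSpace ℝ (Fin 4))
      = WithLp.toLp 2 ![0, t k ^ (q - 1), 0, 1] := by
    ext i
    fin_cases i <;> simp [Real.rpow_sub_one (ht₀ k).ne', (ht₀ k).ne', div_eq_inv_mul]
  simp_rw [h_eq]
  refine ((PiLp.continuous_toLp 2 _).tendsto _).comp (tendsto_pi_nhds.2 fun i => ?_)
  fin_cases i <;> simp [ht.rpow_const_nhds_zero (by linarith : 0 < q - 1)]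

/-- for `1 < β < q`, the tangent cone at the origin of the bridge
`A_{q,β}` is the single ray `{(0,0,0,t) : t ≥ 0}`. -/
theorem tangentCone_bridge (q β : ℝ) (hβ : 1 < β) (hq : β < q) :
    T0 (bridge q β) =
      {p : EuclideanSpace ℝ (Fin 4) | ∃ t : ℝ, 0 ≤ t ∧ p = ![0, 0, 0, t]} := by
  ext w
  constructor
  · intro hw
    obtain ⟨hw₃, hw_zero⟩ :=
      T0_cusp_subset 3 hβ (T0_mono (bridge_subset_cusp (by linarith) hq.le) hw)
    refine ⟨w 3, hw₃, funext fun i => ?_⟩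
    fin_cases i <;> simp [hw_zero]
  · rintro ⟨c, hc, hw⟩
    have hw' : w = c • WithLp.toLp 2 ![0, 0, 0, 1] := PiLp.ext fun i => by
      fin_cases i <;> simp [hw]
    set t : ℕ → ℝ := fun k => 1 / ((k : ℝ) + 1)
    have ht₀ (k : ℕ) : 0 < t k := by positivity
    have ht₁ (k : ℕ) : t k ≤ 1 := div_le_one_of_le₀ (by simp) (by positivity)
    rw [hw']
    refine smul_mem_T0_of_tendsto_inv_smul (fun k => ?_) ht₀
      tendsto_one_div_add_atTop_nhds_zero_nat
      (tendsto_inv_smul_bridge_curve (hβ.trans hq) ht₀ tendsto_one_div_add_atTop_nhds_zero_nat) hc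
    exact ⟨0, t k, (ht₀ k).le, ht₁ k, by simpa using Real.rpow_nonneg (ht₀ k).le β, Or.inl rfl⟩
end
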